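/- If the set of ordered set partitions of [n] solving a scheduling problem S satisfies the partitionability conditions (closure under directed refinement and existence of unique coarsest elements as above), then the h*-vector of χ_S is non-negative: writing χ_S(k) = Σ_{i=1}^n h*_i · C(k+n−i, n), all h*_i ≥ 0. -/

import Mathlib

/-- A scheduling problem on `n` items: a boolean formula over atoms `x i ≤ x j`. -/
inductive SForm (n : ℕ) : Type
  | atom (i j : Fin n) : SForm n
  | not (φ : SForm n) : SForm n
  | and (φ ψ : SForm n) : SForm n
  | or (φ ψ : SForm n) : SForm n

/-- Evaluation of a scheduling formula at an assignment `a : Fin n → ℕ`. -/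
def SForm.eval {n : ℕ} : SForm n → (Fin n → ℕ) → Bool
  | .atom i j, a => decide (a i ≤ a j)
  | .not φ, a => !(φ.eval a)
  | .and φ ψ, a => φ.eval a && ψ.eval a
  | .or φ ψ, a => φ.eval a || ψ.eval a

/-- `schedCount S k` = number of vectors `a ∈ [k]^n` (entries in `{1,…,k}`) solving `S`. -/
def schedCount {n : ℕ} (S : SForm n) (k : ℕ) : ℕ :=
  ((Fintype.piFinset fun _ : Fin n => Finset.Icc 1 k).filter
    fun a => S.eval a = true).card

/-- An ordered set partition of `[n]`. -/
structure OSP (n : ℕ) where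
  blocks : List (Finset (Fin n))
  nonempty : ∀ B ∈ blocks, B.Nonempty
  pairwiseDisjoint : blocks.Pairwise Disjoint
  cover : ∀ i : Fin n, ∃ B ∈ blocks, i ∈ B

/-- Number of blocks of an ordered set partition. -/
def OSP.length {n : ℕ} (Φ : OSP n) : ℕ := Φ.blocks.length

/-- `Φ.delta a` : the order class of `a` is `Φ`, i.e. coordinates of `a` are constant on each
block and ordered according to the block order. -/
def OSP.delta {n : ℕ} (Φ : OSP n) (a : Fin n → ℕ) : Prop :=
  ∃ idx : Fin n → Fin Φ.blocks.length,
    (∀ i, i ∈ Φ.blocks.get (idx i)) ∧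
    (∀ i j, a i ≤ a j ↔ (idx i : ℕ) ≤ (idx j : ℕ))

/-- An ordered set partition `Φ` solves `S` if every vector with order class `Φ` satisfies `S`. -/
def OSP.solves {n : ℕ} (Φ : OSP n) (S : SForm n) : Prop :=
  ∀ a : Fin n → ℕ, Φ.delta a → S.eval a = true

/-- `Ψ.refines Φ` : `Φ` is obtained from `Ψ` by merging consecutive blocks. -/
def OSP.refines {n : ℕ} (Ψ Φ : OSP n) : Prop :=
  ∃ g : Fin Ψ.blocks.length → Fin Φ.blocks.length,
    Monotone g ∧
    ∀ l : Fin Φ.blocks.length,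
      Φ.blocks.get l =
        (Finset.univ.filter fun m => g m = l).biUnion fun m => Ψ.blocks.get m

/-- One step of directed refinement: `F` is obtained from `C` by splitting one block into two
adjacent blocks, every element of the first being less than every element of the second. -/
def dirCov {n : ℕ} (C F : OSP n) : Prop :=
  ∃ (L R : List (Finset (Fin n))) (B₁ B₂ : Finset (Fin n)),
    F.blocks = L ++ B₁ :: B₂ :: R ∧
    C.blocks = L ++ (B₁ ∪ B₂) :: R ∧
    ∀ x ∈ B₁, ∀ y ∈ B₂, x < y

/-- `dirRef C F` : `F` is a directed refinement of `C` (`C ⪯ F`). -/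
def dirRef {n : ℕ} : OSP n → OSP n → Prop := Relation.ReflTransGen dirCov

/-!
Solutions of `S` are the vectors whose order class lies in `A`, and every `Φ ∈ A` lies above
exactly one minimal element of `A` (its coarsest element), so the solutions split according to
that minimal element `Ψ`. A vector's order class refines `Ψ` exactly when the vector increases
strictly from block to block of `Ψ` and weakly inside each block. Read block by block and shifted
by `t - (block index of t)`, such a vector becomes a strictly increasing sequence in
`[1, k + n - ℓ]`, where `ℓ` is the number of blocks of `Ψ`; so there are `C(k + n - ℓ, n)` of them,
and `h*_i` is the number of minimal elements of `A` with `i` blocks.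
-/

open Finset

theorem Fin.eq_and_val_eq_of_le_iff {α : Type*} {ℓ ℓ' : ℕ} {f : α → Fin ℓ} {g : α → Fin ℓ'}
    (hf : Function.Surjective f) (hg : Function.Surjective g)
    (h : ∀ x y, f x ≤ f y ↔ g x ≤ g y) : ℓ = ℓ' ∧ ∀ x, (f x : ℕ) = g x := by
  set F : Fin ℓ → Fin ℓ' := g ∘ Function.surjInv hf
  have hF : ∀ x, F (f x) = g x := fun x =>
    have hx := Function.surjInv_eq hf (f x)
    le_antisymm ((h _ x).1 hx.le) ((h x _).1 hx.ge)
  have hmono : StrictMono F := by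
    intro l m hlm
    obtain ⟨x, rfl⟩ := hf l
    obtain ⟨y, rfl⟩ := hf m
    rw [hF, hF]
    exact lt_of_not_ge fun hyx => hlm.not_ge ((h y x).2 hyx)
  have hsurj : Function.Surjective F := fun l => by
    obtain ⟨x, rfl⟩ := hg l
    exact ⟨f x, hF x⟩
  let e := StrictMono.orderIsoOfSurjective F hmono hsurj
  refine ⟨by simpa using Fintype.card_congr e.toEquiv, fun x => ?_⟩
  rw [← hF x]
  exact (Fin.coe_orderIso_apply e (f x)).symm

noncomputable def valueRank {n : ℕ} (a : Fin n → ℕ) (i : Fin n) : Fin (univ.image a).card :=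
  ((univ.image a).orderIsoOfFin rfl).symm ⟨a i, mem_image_of_mem a (mem_univ i)⟩

theorem valueRank_le_iff {n : ℕ} (a : Fin n → ℕ) (i j : Fin n) :
    valueRank a i ≤ valueRank a j ↔ a i ≤ a j := by
  simp [valueRank]

theorem valueRank_surjective {n : ℕ} (a : Fin n → ℕ) : Function.Surjective (valueRank a) := by
  intro l
  obtain ⟨i, -, hi⟩ := mem_image.1 ((univ.image a).orderIsoOfFin rfl l).2
  refine ⟨i, ?_⟩
  rw [valueRank, OrderIso.symm_apply_eq]
  exact Subtype.ext hi

theorem card_filter_strictMono_piFinset {α : Type*} [LinearOrder α] (s : Finset α) (N : ℕ) :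
    #{f ∈ Fintype.piFinset fun _ : Fin N => s | StrictMono f} = (#s).choose N := by
  rw [← card_powersetCard]
  refine card_bij (fun f _ => univ.image f) (fun f hf => ?_) (fun f hf g hg hfg => ?_)
    (fun t ht => ?_)
  · obtain ⟨hfs, hmono⟩ := mem_filter.1 hf
    refine mem_powersetCard.2 ⟨fun x hx => ?_, by simp [card_image_of_injective _ hmono.injective]⟩
    obtain ⟨t, -, rfl⟩ := mem_image.1 hx
    exact Fintype.mem_piFinset.1 hfs t
  · have hcard : #(univ.image f) = N := by
      simp [card_image_of_injective _ (mem_filter.1 hf).2.injective]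
    have hf' := orderEmbOfFin_unique hcard (fun t => mem_image_of_mem f (mem_univ t))
      (mem_filter.1 hf).2
    have hg' := orderEmbOfFin_unique hcard (fun t => hfg ▸ mem_image_of_mem g (mem_univ t))
      (mem_filter.1 hg).2
    exact hf'.trans hg'.symm
  · obtain ⟨hts, htN⟩ := mem_powersetCard.1 ht
    refine ⟨t.orderEmbOfFin htN, mem_filter.2 ⟨Fintype.mem_piFinset.2 fun i => hts
      (orderEmbOfFin_mem t htN i), (t.orderEmbOfFin htN).strictMono⟩,
      image_orderEmbOfFin_univ t htN⟩

theorem StrictMono.add_sub_le_of_le {N : ℕ} {f : Fin N → ℕ} (hf : StrictMono f) {t t' : Fin N}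
    (h : t ≤ t') : f t + (t' - t : ℕ) ≤ f t' := by
  have := card_le_card_of_injOn f (s := Icc t t') (t := Icc (f t) (f t'))
    (fun x hx => by
      obtain ⟨h₁, h₂⟩ := mem_Icc.1 hx
      exact mem_Icc.2 ⟨hf.monotone h₁, hf.monotone h₂⟩)
    hf.injective.injOn
  simp only [Fin.card_Icc, Nat.card_Icc] at this
  have := hf.monotone h
  omega

theorem StrictMono.bounds_of_mem_Icc {N m : ℕ} {f : Fin N → ℕ} (hf : StrictMono f)
    (hm : ∀ t, f t ∈ Icc 1 m) (t : Fin N) : (t : ℕ) + 1 ≤ f t ∧ f t + (N - 1 - t) ≤ m := by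
  have := t.pos
  have g₀ := hf.add_sub_le_of_le (show ⟨0, t.pos⟩ ≤ t from Nat.zero_le _)
  have g₁ := hf.add_sub_le_of_le (show t ≤ ⟨N - 1, by omega⟩ from Nat.le_sub_one_of_lt t.isLt)
  have h₀ := mem_Icc.1 (hm ⟨0, t.pos⟩)
  have h₁ := mem_Icc.1 (hm ⟨N - 1, by omega⟩)
  simp only at g₀ g₁
  omega

theorem Monotone.val_le_val_add_sub_of_surjective {N ℓ : ℕ} {f : Fin N → Fin ℓ}
    (hf : Monotone f) (hs : Function.Surjective f) {t t' : Fin N} (h : t ≤ t') :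
    (f t' : ℕ) ≤ f t + (t' - t : ℕ) := by
  have := card_le_card_of_surjOn f (s := Icc t t') (t := Icc (f t) (f t')) fun l hl => by
    obtain ⟨h₁, h₂⟩ := mem_Icc.1 hl
    obtain ⟨r, rfl⟩ := hs l
    rcases lt_or_ge r t with hrt | hrt
    · exact ⟨t, by simp [h], le_antisymm h₁ (hf hrt.le)⟩
    rcases le_or_gt r t' with hrt' | hrt'
    · exact ⟨r, by simp [hrt, hrt'], rfl⟩
    · exact ⟨t', by simp [h], le_antisymm (hf hrt'.le) h₂⟩
  simp only [Fin.card_Icc] at this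
  have := hf h
  rw [Fin.le_def] at this
  omega

theorem Monotone.bounds_of_surjective {N ℓ : ℕ} {f : Fin N → Fin ℓ} (hf : Monotone f)
    (hs : Function.Surjective f) (t : Fin N) : (f t : ℕ) ≤ t ∧ ℓ + t ≤ N + f t := by
  have := t.pos
  obtain ⟨r₀, hr₀⟩ := hs ⟨0, (f t).pos⟩
  obtain ⟨r₁, hr₁⟩ := hs ⟨ℓ - 1, by have := (f t).isLt; omega⟩
  have h₀ : f ⟨0, t.pos⟩ ≤ f r₀ := hf (Nat.zero_le _)
  have h₁ : f r₁ ≤ f ⟨N - 1, by omega⟩ := hf (Nat.le_sub_one_of_lt r₁.isLt)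
  have g₀ := hf.val_le_val_add_sub_of_surjective hs (show ⟨0, t.pos⟩ ≤ t from Nat.zero_le _)
  have g₁ := hf.val_le_val_add_sub_of_surjective hs
    (show t ≤ ⟨N - 1, by omega⟩ from Nat.le_sub_one_of_lt t.isLt)
  rw [Fin.le_def, hr₀] at h₀
  rw [Fin.le_def, hr₁] at h₁
  simp only at h₀ h₁ g₀ g₁
  omega

theorem Monotone.strictMono_add_sub {N ℓ : ℕ} {f : Fin N → Fin ℓ} (hf : Monotone f)
    (hs : Function.Surjective f) {b : Fin N → ℕ} (hb : Monotone b)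
    (hstrict : ∀ t t', f t < f t' → b t < b t') : StrictMono fun t => b t + (t - f t : ℕ) := by
  intro t t' htt'
  dsimp only
  have := hf.val_le_val_add_sub_of_surjective hs htt'.le
  have := hb htt'.le
  have := (hf.bounds_of_surjective hs t).1
  have := (hf.bounds_of_surjective hs t').1
  rw [Fin.lt_def] at htt'
  rcases lt_or_eq_of_le (hf htt'.le) with hlt | heq
  · have := hstrict t t' hlt
    rw [Fin.lt_def] at hlt
    omega
  · have := congrArg Fin.val heq
    omega

theorem StrictMono.monotone_add_sub {N ℓ : ℕ} {f : Fin N → Fin ℓ} (hf : Monotone f)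
    {c : Fin N → ℕ} (hc : StrictMono c) (hc₁ : ∀ t : Fin N, (t : ℕ) + 1 ≤ c t) :
    Monotone (fun t : Fin N => c t + (f t : ℕ) - t) ∧
      ∀ t t', f t < f t' → c t + f t - t < c t' + (f t' : ℕ) - t' := by
  refine ⟨fun t t' htt' => ?_, fun t t' hlt => ?_⟩
  · have := hc.add_sub_le_of_le htt'
    have := hf htt'
    rw [Fin.le_def] at this
    dsimp only
    omega
  · have htt' : t < t' := lt_of_not_ge fun h => (hf h).not_gt hlt
    have := hc.add_sub_le_of_le htt'.le
    have := hc₁ t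
    rw [Fin.lt_def] at hlt htt'
    omega

/-- Adding `t - f t` turns a monotone `b` that increases strictly across the steps of `f` into a
strictly monotone sequence in `[1, k + N - ℓ]`. -/
theorem card_filter_monotone_strict_of_lt {N ℓ : ℕ} {f : Fin N → Fin ℓ} (hf : Monotone f)
    (hs : Function.Surjective f) (k : ℕ) :
    #{b ∈ Fintype.piFinset fun _ : Fin N => Icc 1 k |
      Monotone b ∧ ∀ t t', f t < f t' → b t < b t'} = (k + N - ℓ).choose N := by
  have hfb := hf.bounds_of_surjective hs
  rw [← Nat.add_sub_cancel (k + N - ℓ) 1, ← Nat.card_Icc 1, ← card_filter_strictMono_piFinset]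
  refine card_bij' (fun b _ t => b t + (t - f t)) (fun c _ t => c t + f t - t) ?_ ?_ ?_ ?_
  · intro b hb
    simp only [mem_filter, Fintype.mem_piFinset, mem_Icc] at hb ⊢
    obtain ⟨hb, hmono, hstrict⟩ := hb
    refine ⟨fun t => ⟨?_, ?_⟩, hf.strictMono_add_sub hs hmono hstrict⟩ <;>
    · have := hb t
      have := hfb t
      omega
  · intro c hc
    simp only [mem_filter, Fintype.mem_piFinset, mem_Icc] at hc ⊢
    obtain ⟨hc, hmono⟩ := hc
    have hcb := hmono.bounds_of_mem_Icc fun t => mem_Icc.2 (hc t)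
    refine ⟨fun t => ⟨?_, ?_⟩, hmono.monotone_add_sub hf fun t => (hcb t).1⟩ <;>
    · have := hcb t
      have := hfb t
      have := (f t).isLt
      omega
  · intro b _
    funext t
    have := hfb t
    dsimp only
    omega
  · intro c hc
    simp only [mem_filter, Fintype.mem_piFinset, mem_Icc] at hc
    funext t
    have := hc.2.bounds_of_mem_Icc (fun t => mem_Icc.2 (hc.1 t)) t
    have := hfb t
    dsimp only
    omega

theorem Finset.sum_comp_eq_sum_card_nsmul {ι κ β : Type*} [AddCommMonoid β] [DecidableEq κ]
    {s : Finset ι} {t : Finset κ} {g : ι → κ} (h : ∀ x ∈ s, g x ∈ t) (f : κ → β) :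
    ∑ x ∈ s, f (g x) = ∑ i ∈ t, #{x ∈ s | g x = i} • f i := by
  rw [← sum_fiberwise_of_maps_to h]
  refine sum_congr rfl fun i _ => ?_
  rw [sum_congr rfl fun x hx => by rw [(mem_filter.1 hx).2], sum_const]

section MinimalElements

variable {α : Type*} [PartialOrder α] {A : Set α}

theorem exists_unique_minimal_le (h : ∀ x ∈ A, ∃ c ∈ A, c ≤ x ∧ ∀ y ∈ A, y ≤ x → c ≤ y)
    {x : α} (hx : x ∈ A) : ∃! m, Minimal (· ∈ A) m ∧ m ≤ x := by
  obtain ⟨c, hcA, hcx, hmin⟩ := h x hx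
  refine ⟨c, ⟨⟨hcA, fun y hy hyc => hmin y hy (hyc.trans hcx)⟩, hcx⟩, fun m ⟨hm, hmx⟩ => ?_⟩
  exact le_antisymm (hm.2 hcA (hmin m hm.1 hmx)) (hmin m hm.1 hmx)

open scoped Classical in
theorem card_filter_mem_eq_sum_card_minimal [Fintype α] {β : Type*} (hA : IsUpperSet A)
    (huniq : ∀ x ∈ A, ∃! m, Minimal (· ∈ A) m ∧ m ≤ x) (s : Finset β) (g : β → α) :
    #{b ∈ s | g b ∈ A} = ∑ m with Minimal (· ∈ A) m, #{b ∈ s | m ≤ g b} := by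
  have hfibre : ∀ b, #{m | Minimal (· ∈ A) m ∧ m ≤ g b} = if g b ∈ A then 1 else 0 := by
    intro b
    split_ifs with hb
    · obtain ⟨m, hm, huniq⟩ := huniq _ hb
      exact card_eq_one.2 ⟨m, eq_singleton_iff_unique_mem.2 ⟨by simpa using hm,
        fun m' hm' => huniq m' (by simpa using hm')⟩⟩
    · exact card_eq_zero.2 (filter_eq_empty_iff.2 fun m _ hm => hb (hA hm.2 hm.1.1))
  rw [card_filter, ← sum_congr rfl fun b _ => hfibre b]
  simp_rw [← filter_filter]
  exact sum_card_bipartiteAbove_eq_sum_card_bipartiteBelow _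

end MinimalElements

theorem SForm.eval_congr {n : ℕ} (S : SForm n) {a b : Fin n → ℕ}
    (h : ∀ i j, a i ≤ a j ↔ b i ≤ b j) : S.eval a = S.eval b := by
  induction S with
  | atom i j => simp [SForm.eval, h i j]
  | not φ ih => simp [SForm.eval, ih]
  | and φ ψ ih₁ ih₂ => simp [SForm.eval, ih₁, ih₂]
  | or φ ψ ih₁ ih₂ => simp [SForm.eval, ih₁, ih₂]

instance : IsEmpty (SForm 0) where
  false S := by
    induction S with
    | atom i => exact i.elim0
    | not _ ih | and _ _ ih | or _ _ ih => exact ih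

namespace OSP

variable {n : ℕ}

theorem ext_blocks {Φ Ψ : OSP n} (h : Φ.blocks = Ψ.blocks) : Φ = Ψ := by
  cases Φ; cases Ψ; simpa using h

theorem eq_of_mem_get (Φ : OSP n) {i : Fin n} {l m : Fin Φ.blocks.length}
    (hl : i ∈ Φ.blocks.get l) (hm : i ∈ Φ.blocks.get m) : l = m := by
  by_contra hne
  rcases lt_or_gt_of_ne hne with h | h
  · exact disjoint_left.mp (List.pairwise_iff_get.1 Φ.pairwiseDisjoint l m h) hl hm
  · exact disjoint_left.mp (List.pairwise_iff_get.1 Φ.pairwiseDisjoint m l h) hm hl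

theorem exists_mem_get (Φ : OSP n) (i : Fin n) : ∃ l, i ∈ Φ.blocks.get l := by
  obtain ⟨B, hB, hi⟩ := Φ.cover i
  obtain ⟨l, rfl⟩ := List.get_of_mem hB
  exact ⟨l, hi⟩

noncomputable def idx (Φ : OSP n) (i : Fin n) : Fin Φ.blocks.length :=
  (Φ.exists_mem_get i).choose

theorem mem_get_idx (Φ : OSP n) (i : Fin n) : i ∈ Φ.blocks.get (Φ.idx i) :=
  (Φ.exists_mem_get i).choose_spec

theorem idx_eq_of_mem (Φ : OSP n) {i : Fin n} {l : Fin Φ.blocks.length}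
    (h : i ∈ Φ.blocks.get l) : Φ.idx i = l :=
  Φ.eq_of_mem_get (Φ.mem_get_idx i) h

theorem idx_eq_idx_of_mem (Φ : OSP n) {B : Finset (Fin n)} (hB : B ∈ Φ.blocks) {i j : Fin n}
    (hi : i ∈ B) (hj : j ∈ B) : Φ.idx i = Φ.idx j := by
  obtain ⟨l, rfl⟩ := List.get_of_mem hB
  rw [Φ.idx_eq_of_mem hi, Φ.idx_eq_of_mem hj]

theorem get_eq_filter_idx (Φ : OSP n) (l : Fin Φ.blocks.length) :
    Φ.blocks.get l = univ.filter fun i => Φ.idx i = l := by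
  ext i
  simp only [mem_filter, mem_univ, true_and]
  exact ⟨Φ.idx_eq_of_mem, fun h => h ▸ Φ.mem_get_idx i⟩

theorem idx_surjective (Φ : OSP n) : Function.Surjective Φ.idx := fun l =>
  (Φ.nonempty _ (Φ.blocks.get_mem l)).imp fun _ => Φ.idx_eq_of_mem

theorem length_le (Φ : OSP n) : Φ.blocks.length ≤ n := by
  simpa using Fintype.card_le_of_surjective _ Φ.idx_surjective

theorem length_pos (Φ : OSP n) (hn : 0 < n) : 0 < Φ.blocks.length :=
  (Φ.idx ⟨0, hn⟩).pos

theorem ext_idx {Φ Ψ : OSP n} (hlen : Φ.blocks.length = Ψ.blocks.length)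
    (h : ∀ i, (Φ.idx i : ℕ) = Ψ.idx i) : Φ = Ψ := by
  refine ext_blocks (List.ext_get hlen fun p hΦ hΨ => ?_)
  rw [get_eq_filter_idx, get_eq_filter_idx]
  ext i
  simp [Fin.ext_iff, h]

instance : Finite (OSP n) :=
  have : Finite {L : List (Finset (Fin n)) // L.length ≤ n} := List.finite_length_le _ n
  Finite.of_injective (fun Φ => (⟨Φ.blocks, Φ.length_le⟩ : {L // L.length ≤ n}))
    fun _ _ h => ext_blocks (congrArg Subtype.val h)

noncomputable instance : Fintype (OSP n) := Fintype.ofFinite _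

theorem delta_iff (Φ : OSP n) (a : Fin n → ℕ) :
    Φ.delta a ↔ ∀ i j, a i ≤ a j ↔ Φ.idx i ≤ Φ.idx j := by
  refine ⟨fun ⟨f, hf, hfa⟩ i j => ?_, fun h => ⟨Φ.idx, Φ.mem_get_idx, h⟩⟩
  rw [hfa, Φ.idx_eq_of_mem (hf i), Φ.idx_eq_of_mem (hf j), Fin.le_iff_val_le_val]

theorem delta_unique {Φ Ψ : OSP n} {a : Fin n → ℕ} (hΦ : Φ.delta a) (hΨ : Ψ.delta a) :
    Φ = Ψ :=
  have h := Fin.eq_and_val_eq_of_le_iff Φ.idx_surjective Ψ.idx_surjective fun i j => by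
    rw [← (Φ.delta_iff a).1 hΦ, ← (Ψ.delta_iff a).1 hΨ]
  ext_idx h.1 h.2

def ofFun {m : ℕ} (f : Fin n → Fin m) (hf : Function.Surjective f) : OSP n where
  blocks := List.ofFn fun l => univ.filter (f · = l)
  nonempty := by
    simp only [List.mem_ofFn, forall_exists_index]
    rintro _ l rfl
    obtain ⟨i, rfl⟩ := hf l
    exact ⟨i, by simp⟩
  pairwiseDisjoint := List.pairwise_ofFn.2 fun l m hlm =>
    disjoint_filter.2 fun _ _ hl hm => hlm.ne (hl ▸ hm)
  cover i := ⟨_, List.mem_ofFn.2 ⟨f i, rfl⟩, by simp⟩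

theorem idx_ofFun {m : ℕ} (f : Fin n → Fin m) (hf : Function.Surjective f) (i : Fin n) :
    ((ofFun f hf).idx i : ℕ) = f i := by
  have hi : i ∈ (ofFun f hf).blocks.get ⟨f i, by simp [ofFun]⟩ := by simp [ofFun]
  rw [(ofFun f hf).idx_eq_of_mem hi]

end OSP

noncomputable def orderClass {n : ℕ} (a : Fin n → ℕ) : OSP n :=
  OSP.ofFun (valueRank a) (valueRank_surjective a)

theorem delta_orderClass {n : ℕ} (a : Fin n → ℕ) : (orderClass a).delta a := by
  refine ((orderClass a).delta_iff a).2 fun i j => ?_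
  rw [Fin.le_iff_val_le_val, orderClass, OSP.idx_ofFun, OSP.idx_ofFun, ← Fin.le_iff_val_le_val,
    valueRank_le_iff]

theorem solves_orderClass_iff {n : ℕ} (S : SForm n) (a : Fin n → ℕ) :
    (orderClass a).solves S ↔ S.eval a = true := by
  refine ⟨fun h => h a (delta_orderClass a), fun h b hb => ?_⟩
  rw [← h]
  refine S.eval_congr fun i j => ?_
  rw [((orderClass a).delta_iff b).1 hb, ((orderClass a).delta_iff a).1 (delta_orderClass a)]

namespace OSP

variable {n : ℕ}

theorem idx_of_split {C F : OSP n} {L R : List (Finset (Fin n))} {B₁ B₂ : Finset (Fin n)}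
    (hF : F.blocks = L ++ B₁ :: B₂ :: R) (hC : C.blocks = L ++ (B₁ ∪ B₂) :: R) (i : Fin n) :
    ((F.idx i : ℕ) ≤ L.length → (C.idx i : ℕ) = F.idx i) ∧
    (L.length < F.idx i → (C.idx i : ℕ) + 1 = F.idx i) ∧
    ((F.idx i : ℕ) = L.length → i ∈ B₁) ∧ ((F.idx i : ℕ) = L.length + 1 → i ∈ B₂) := by
  have hi := F.mem_get_idx i
  generalize F.idx i = q at hi ⊢
  obtain ⟨q, hq⟩ := q
  have hqlt : q < L.length + (R.length + 2) := by simpa [hF] using hq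
  have hmemC : ∀ q' (h : q' < C.blocks.length), i ∈ C.blocks.get ⟨q', h⟩ → (C.idx i : ℕ) = q' :=
    fun q' h hm => congrArg Fin.val (C.idx_eq_of_mem hm)
  simp only [List.get_eq_getElem, hF, hC] at hi hmemC ⊢
  rcases lt_or_ge q L.length with h | h
  · rw [List.getElem_append_left h] at hi
    have := hmemC q (by simp; omega) (by rwa [List.getElem_append_left h])
    omega
  obtain ⟨r, rfl⟩ := Nat.exists_eq_add_of_le h
  rcases r with _ | _ | r
  · simp only [Nat.add_zero, List.getElem_append_right (le_refl _), Nat.sub_self,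
      List.getElem_cons_zero] at hi
    have := hmemC L.length (by simp) (by simp [hi])
    exact ⟨fun _ => this, by omega, fun _ => hi, by omega⟩
  · simp only [le_add_iff_nonneg_right, zero_le, List.getElem_append_right, add_tsub_cancel_left,
      List.getElem_cons_succ, List.getElem_cons_zero] at hi
    have := hmemC L.length (by simp) (by simp [hi])
    exact ⟨by omega, by omega, by omega, fun _ => hi⟩
  · simp only [le_add_iff_nonneg_right, zero_le, List.getElem_append_right, add_tsub_cancel_left,
      List.getElem_cons_succ] at hi
    have := hmemC (L.length + (r + 1)) (by simp; omega)
      (by simpa [List.getElem_append_right] using hi)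
    omega

theorem length_of_dirCov {C F : OSP n} (h : dirCov C F) :
    F.blocks.length = C.blocks.length + 1 := by
  obtain ⟨L, R, B₁, B₂, hF, hC, -⟩ := h
  simp [hF, hC]
  omega

theorem length_le_of_dirRef {C F : OSP n} (h : dirRef C F) :
    C.blocks.length ≤ F.blocks.length := by
  induction h with
  | refl => rfl
  | tail _ hcov ih => rw [length_of_dirCov hcov]; omega

/-- Directed refinement `⪯`; it is antisymmetric because every step adds a block. -/
instance : PartialOrder (OSP n) where
  le := dirRef
  le_refl _ := Relation.ReflTransGen.refl
  le_trans _ _ _ := Relation.ReflTransGen.trans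
  le_antisymm C F hCF hFC := by
    rcases Relation.reflTransGen_iff_eq_or_transGen.1 hCF with h | h
    · exact h.symm
    obtain ⟨G, hCG, hGF⟩ := Relation.TransGen.tail'_iff.1 h
    have := length_le_of_dirRef hCG
    have := length_of_dirCov hGF
    have := length_le_of_dirRef hFC
    omega

def Compatible (Ψ : OSP n) (a : Fin n → ℕ) : Prop :=
  ∀ i j, (Ψ.idx i < Ψ.idx j → a i < a j) ∧ (Ψ.idx i = Ψ.idx j → i ≤ j → a i ≤ a j)

theorem Compatible.of_delta {Φ : OSP n} {a : Fin n → ℕ} (h : Φ.delta a) : Φ.Compatible a := by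
  rw [delta_iff] at h
  exact fun i j => ⟨fun hlt => lt_of_not_ge fun hle => hlt.not_ge ((h j i).1 hle),
    fun heq _ => (h i j).2 heq.le⟩

theorem Compatible.of_dirCov {C F : OSP n} {a : Fin n → ℕ} (h : dirCov C F)
    (ha : F.Compatible a) : C.Compatible a := by
  obtain ⟨L, R, B₁, B₂, hF, hC, horder⟩ := h
  intro i j
  have hi := idx_of_split hF hC i
  have hj := idx_of_split hF hC j
  simp only [Fin.lt_def, Fin.ext_iff]
  refine ⟨fun hlt => (ha i j).1 (by omega), fun heq hij => ?_⟩
  rcases lt_trichotomy (F.idx i : ℕ) (F.idx j) with h | h | h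
  · exact ((ha i j).1 h).le
  · exact (ha i j).2 (Fin.ext h) hij
  · exact absurd hij (not_le.2 (horder j (hj.2.2.1 (by omega)) i (hi.2.2.2 (by omega))))

theorem Compatible.of_le {C F : OSP n} {a : Fin n → ℕ} (h : C ≤ F) (ha : F.Compatible a) :
    C.Compatible a := by
  induction h using Relation.ReflTransGen.head_induction_on with
  | refl => exact ha
  | head hcov _ ih => exact ih.of_dirCov hcov

theorem Compatible.split {C F : OSP n} {a : Fin n → ℕ} {L R : List (Finset (Fin n))}
    {B₁ B₂ : Finset (Fin n)} (hF : F.blocks = L ++ B₁ :: B₂ :: R)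
    (hC : C.blocks = L ++ (B₁ ∪ B₂) :: R) (hsep : ∀ x ∈ B₁, ∀ y ∈ B₂, a x < a y)
    (ha : C.Compatible a) : F.Compatible a := by
  intro i j
  have hi := idx_of_split hF hC i
  have hj := idx_of_split hF hC j
  simp only [Fin.lt_def, Fin.ext_iff]
  refine ⟨fun hlt => ?_, fun heq hij => (ha i j).2 (Fin.ext (by omega)) hij⟩
  rcases lt_or_eq_of_le (show (C.idx i : ℕ) ≤ C.idx j by omega) with h | h
  · exact (ha i j).1 h
  · exact hsep i (hi.2.2.1 (by omega)) j (hj.2.2.2 (by omega))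

def split (C : OSP n) {L R : List (Finset (Fin n))} {B₁ B₂ : Finset (Fin n)}
    (hC : C.blocks = L ++ (B₁ ∪ B₂) :: R) (h₁ : B₁.Nonempty) (h₂ : B₂.Nonempty)
    (hd : Disjoint B₁ B₂) : OSP n where
  blocks := L ++ B₁ :: B₂ :: R
  nonempty B hB := by
    have := C.nonempty
    simp only [hC, List.mem_append, List.mem_cons] at this hB
    rcases hB with hB | rfl | rfl | hB
    exacts [this B (.inl hB), h₁, h₂, this B (.inr (.inr hB))]
  pairwiseDisjoint := by
    have := C.pairwiseDisjoint
    simp only [hC, List.pairwise_append, List.pairwise_cons, List.mem_cons,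
      disjoint_union_left] at this ⊢
    aesop
  cover i := by
    obtain ⟨B, hB, hi⟩ := C.cover i
    simp only [hC, List.mem_append, List.mem_cons] at hB
    rcases hB with hB | rfl | hB
    · exact ⟨B, by simp [hB], hi⟩
    · rcases mem_union.1 hi with hi | hi
      · exact ⟨B₁, by simp, hi⟩
      · exact ⟨B₂, by simp, hi⟩
    · exact ⟨B, by simp [hB], hi⟩

theorem delta_of_compatible {Ψ : OSP n} {a : Fin n → ℕ} (h : Ψ.Compatible a)
    (hconst : ∀ B ∈ Ψ.blocks, ∀ i ∈ B, ∀ j ∈ B, a j ≤ a i) : Ψ.delta a := by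
  refine (delta_iff Ψ a).2 fun i j => ⟨fun hij => le_of_not_gt fun hlt => ?_, fun hij => ?_⟩
  · exact hij.not_gt ((h j i).1 hlt)
  rcases lt_or_eq_of_le hij with hlt | heq
  · exact ((h i j).1 hlt).le
  · exact hconst _ (Ψ.blocks.get_mem (Ψ.idx j)) _ (Ψ.mem_get_idx j) _ (heq ▸ Ψ.mem_get_idx i)

theorem le_orderClass_of_compatible {Ψ : OSP n} {a : Fin n → ℕ} (h : Ψ.Compatible a) :
    Ψ ≤ orderClass a := by
  induction hd : n - Ψ.blocks.length using Nat.strong_induction_on generalizing Ψ with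
  | _ d ih =>
  -- Either `a` is constant on the blocks of `Ψ`, and then `Ψ` is its order class, or cutting a
  -- block at some value of `a` gives a directed refinement that is still compatible with `a`.
  by_cases hconst : ∀ B ∈ Ψ.blocks, ∀ i ∈ B, ∀ j ∈ B, a j ≤ a i
  · exact (delta_unique (delta_of_compatible h hconst) (delta_orderClass a)).le
  push Not at hconst
  obtain ⟨B, hB, i₀, hi₀, j₀, hj₀, hlt⟩ := hconst
  obtain ⟨L, R, hLR⟩ := List.append_of_mem hB
  set B₁ := B.filter (a · ≤ a i₀)
  set B₂ := B.filter (¬ a · ≤ a i₀)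
  have hC : Ψ.blocks = L ++ (B₁ ∪ B₂) :: R := by rwa [filter_union_filter_not_eq]
  have hsep : ∀ x ∈ B₁, ∀ y ∈ B₂, a x < a y := fun x hx y hy =>
    lt_of_le_of_lt (mem_filter.1 hx).2 (not_le.1 (mem_filter.1 hy).2)
  have horder : ∀ x ∈ B₁, ∀ y ∈ B₂, x < y := fun x hx y hy => lt_of_not_ge fun hyx =>
    (hsep x hx y hy).not_ge <| (h y x).2
      (Ψ.idx_eq_idx_of_mem hB (filter_subset _ _ hy) (filter_subset _ _ hx)) hyx
  let F := Ψ.split hC ⟨i₀, by simp [B₁, hi₀]⟩ ⟨j₀, by simp [B₂, hj₀, hlt]⟩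
    (disjoint_filter_filter_not _ _ _)
  have hcov : dirCov Ψ F := ⟨L, R, B₁, B₂, rfl, hC, horder⟩
  have hlen := length_of_dirCov hcov
  have := F.length_le
  exact Relation.ReflTransGen.head hcov (ih _ (by omega) (h.split rfl hC hsep) rfl)

theorem le_orderClass_iff {Ψ : OSP n} {a : Fin n → ℕ} : Ψ ≤ orderClass a ↔ Ψ.Compatible a :=
  ⟨fun h => (Compatible.of_delta (delta_orderClass a)).of_le h, le_orderClass_of_compatible⟩

noncomputable def readingOrder (Ψ : OSP n) : Equiv.Perm (Fin n) :=
  Tuple.sort fun i => toLex (Ψ.idx i, i)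

theorem strictMono_readingOrder (Ψ : OSP n) :
    StrictMono fun t => toLex (Ψ.idx (Ψ.readingOrder t), Ψ.readingOrder t) :=
  (Tuple.monotone_sort fun i => toLex (Ψ.idx i, i)).strictMono_of_injective fun _ _ h =>
    Ψ.readingOrder.injective (congrArg (fun p : Fin Ψ.blocks.length ×ₗ Fin n => (ofLex p).2) h)

theorem monotone_idx_readingOrder (Ψ : OSP n) : Monotone (Ψ.idx ∘ Ψ.readingOrder) :=
  fun _ _ h => Prod.Lex.monotone_fst _ _ (Ψ.strictMono_readingOrder.monotone h)

theorem compatible_iff (Ψ : OSP n) (a : Fin n → ℕ) :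
    Ψ.Compatible a ↔ Monotone (a ∘ Ψ.readingOrder) ∧
      ∀ t t', Ψ.idx (Ψ.readingOrder t) < Ψ.idx (Ψ.readingOrder t') →
        a (Ψ.readingOrder t) < a (Ψ.readingOrder t') := by
  set σ := Ψ.readingOrder
  have hσ := Ψ.strictMono_readingOrder
  refine ⟨fun h => ⟨fun t t' htt' => ?_, fun t t' => (h _ _).1⟩, fun ⟨hmono, hstrict⟩ i j => ?_⟩
  · rcases Prod.Lex.le_iff.1 (hσ.monotone htt') with hlt | ⟨heq, hle⟩
    exacts [((h _ _).1 hlt).le, (h _ _).2 heq hle]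
  · obtain ⟨t, rfl⟩ := σ.surjective i
    obtain ⟨t', rfl⟩ := σ.surjective j
    refine ⟨hstrict t t', fun heq hle => hmono (hσ.le_iff_le.1 ?_)⟩
    exact Prod.Lex.le_iff.2 (.inr ⟨heq, hle⟩)

open scoped Classical in
theorem card_compatible (Ψ : OSP n) (k : ℕ) :
    #{a ∈ Fintype.piFinset fun _ : Fin n => Icc 1 k | Ψ.Compatible a} =
      (k + n - Ψ.blocks.length).choose n := by
  set σ := Ψ.readingOrder
  rw [← card_filter_monotone_strict_of_lt Ψ.monotone_idx_readingOrder
    (Ψ.idx_surjective.comp σ.surjective)]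
  refine card_nbij' (· ∘ σ) (· ∘ σ.symm) (fun a ha => ?_) (fun b hb => ?_)
    (fun a _ => funext fun t => by simp) (fun b _ => funext fun t => by simp)
  · simp only [coe_filter, Fintype.mem_piFinset, compatible_iff] at ha ⊢
    exact ⟨fun t => ha.1 _, ha.2⟩
  · simp only [coe_filter, Fintype.mem_piFinset, compatible_iff] at hb ⊢
    exact ⟨fun t => hb.1 _, by simpa [σ, Function.comp_def] using hb.2⟩

end OSP

/-- under the partitionability conditions (closure under directed refinement and
unique coarsest elements) the `h*`-vector of `χ_S` is non-negative: there exist natural numbers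
`h*_i` with `χ_S(k) = Σ_{i=1}^n h*_i · C(k+n−i, n)`. -/
theorem hstar_nonneg {n : ℕ} (S : SForm n)
    (A : Set (OSP n)) (hA : A = {Φ : OSP n | Φ.solves S})
    (hclosed : ∀ Φ ∈ A, ∀ Ψ : OSP n, dirRef Φ Ψ → Ψ ∈ A)
    (hcoarse : ∀ Φ ∈ A, ∃! Φc : OSP n,
      Φc ∈ A ∧ dirRef Φc Φ ∧ ∀ Ψ ∈ A, dirRef Ψ Φ → dirRef Φc Ψ) :
    ∃ hstar : ℕ → ℕ, ∀ k : ℕ, 1 ≤ k →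
      schedCount S k = ∑ i ∈ Finset.Icc 1 n, hstar i * (k + n - i).choose n := by
  classical
  rcases Nat.eq_zero_or_pos n with rfl | hn
  · exact isEmptyElim S
  have hup : IsUpperSet A := fun Φ Ψ h hΦ => hclosed Φ hΦ Ψ h
  have huniq : ∀ Φ ∈ A, ∃! Ψ, Minimal (· ∈ A) Ψ ∧ Ψ ≤ Φ := fun Φ =>
    exists_unique_minimal_le fun Φ hΦ => (hcoarse Φ hΦ).exists
  have hsol : ∀ a, S.eval a = true ↔ orderClass a ∈ A := fun a => by
    rw [hA]
    exact (solves_orderClass_iff S a).symm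
  refine ⟨fun i => #{Ψ | Minimal (· ∈ A) Ψ ∧ Ψ.blocks.length = i}, fun k _ => ?_⟩
  calc schedCount S k
      = #{a ∈ Fintype.piFinset fun _ => Icc 1 k | orderClass a ∈ A} := by
        simp only [schedCount, hsol]
    _ = ∑ Ψ with Minimal (· ∈ A) Ψ, (k + n - Ψ.blocks.length).choose n := by
      rw [card_filter_mem_eq_sum_card_minimal hup huniq]
      simp only [OSP.le_orderClass_iff, OSP.card_compatible]
    _ = _ := by
      rw [sum_comp_eq_sum_card_nsmul (fun Ψ _ => mem_Icc.2 ⟨Ψ.length_pos hn, Ψ.length_le⟩)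
        fun i => (k + n - i).choose n]
      simp only [filter_filter, smul_eq_mul]
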